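/- arXiv:2002.12354 — 4 statements merged into one kernel-verified Lean document; each statement's English description precedes it below -/
import Mathlib

section
/- Let P ⊆ ℝ^d be a finite nonempty set and let s_1, …, s_k (k ≥ 2) be a farthest-point (Gonzalez) sequence in P. Then for every point p ∈ P, min_{1 ≤ j ≤ k} ‖p − s_j‖ ≤ min_{1 ≤ j < j' ≤ k} ‖s_j − s_{j'}‖; that is, the distance from any point of P to the selected points is at most the minimum pairwise distance among the selected points. -/
set_option maxHeartbeats 1000000
noncomputable section

/-- `s 0, …, s (k-1)` is a farthest-point (Gonzalez) sequence in the finite set `P`: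
all the points belong to `P`, and each `s i` (for `1 ≤ i < k`) maximizes, over `p ∈ P`,
the distance `min_{j < i} ‖p - s j‖` to the previously selected points. -/
def IsGonzalezSeq {d : ℕ} (P : Finset (EuclideanSpace ℝ (Fin d))) (k : ℕ)
    (s : ℕ → EuclideanSpace ℝ (Fin d)) : Prop :=
  (∀ i < k, s i ∈ P) ∧
  ∀ i, 1 ≤ i → i < k → ∀ p ∈ P,
    (⨅ j : Fin i, ‖p - s j.1‖) ≤ ⨅ j : Fin i, ‖s i - s j.1‖

/-- For a Gonzalez sequence `s 0, …, s (k-1)` (`k ≥ 2`) in a finite nonempty set `P`,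
every point of `P` is within distance `min_{j < j' < k} ‖s j - s j'‖` of the selected
points: `min_{l < k} ‖p - s l‖ ≤ ‖s j - s j'‖` for all `j < j' < k`. -/
theorem gonzalez_dist_le_min_pairwise
    {d : ℕ} (P : Finset (EuclideanSpace ℝ (Fin d))) (hP : P.Nonempty)
    (k : ℕ) (hk : 2 ≤ k) (s : ℕ → EuclideanSpace ℝ (Fin d))
    (hs : IsGonzalezSeq P k s) :
    ∀ p ∈ P, ∀ j j' : ℕ, j < j' → j' < k →
      (⨅ l : Fin k, ‖p - s l.1‖) ≤ ‖s j - s j'‖ := by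
  intro p hp j j' hjj' hj'k
  haveI : Nonempty (Fin j') := ⟨⟨j, hjj'⟩⟩
  have hb1 : BddBelow (Set.range fun l : Fin k => ‖p - s l.1‖) :=
    ⟨0, by rintro x ⟨i, rfl⟩; positivity⟩
  have hb2 : BddBelow (Set.range fun l : Fin j' => ‖s j' - s l.1‖) :=
    ⟨0, by rintro x ⟨i, rfl⟩; positivity⟩
  have h1 : (⨅ l : Fin k, ‖p - s l.1‖) ≤ ⨅ l : Fin j', ‖p - s l.1‖ := by
    apply le_ciInf
    intro l
    exact ciInf_le hb1 ⟨l.1, l.2.trans hj'k⟩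
  have h2 := hs.2 j' (by omega) hj'k p hp
  have h3 : (⨅ l : Fin j', ‖s j' - s l.1‖) ≤ ‖s j - s j'‖ := by
    calc (⨅ l : Fin j', ‖s j' - s l.1‖) ≤ ‖s j' - s j‖ :=
          ciInf_le hb2 ⟨j, hjj'⟩
      _ = ‖s j - s j'‖ := norm_sub_rev _ _
  exact h1.trans (h2.trans h3)
end
end

section
/- Let P ⊆ ℝ^d be a finite nonempty set that is covered by k balls of radius r, i.e., P ⊆ ⋃_{l=1}^{k} Ball(c_l, r) for some centers c_1, …, c_k ∈ ℝ^d. Let s_1, …, s_{k'} be a farthest-point (Gonzalez) sequence in P with k' ≥ k. Then P ⊆ ⋃_{j=1}^{k'} Ball(s_j, 2r); that is, every point of P is within distance 2r of some selected point. -/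
noncomputable section

open Metric

/-! A point of `P` farther than `2r` from all the chosen points forms, together with them, a
`2r`-separated family of `k' + 1` points: each chosen point is at least as far from its
predecessors as that point is. A cover by `k ≤ k'` balls of radius `r` would put two points of
this family in one ball. -/

theorem card_le_of_pairwise_two_mul_lt_dist {α ι κ : Type*} [PseudoMetricSpace α]
    [Fintype ι] [Fintype κ] {r : ℝ} {x : ι → α} {c : κ → α}
    (hsep : Pairwise fun i j => 2 * r < dist (x i) (x j))
    (hcov : ∀ i, ∃ l, x i ∈ closedBall (c l) r) : Fintype.card ι ≤ Fintype.card κ := by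
  choose g hg using hcov
  refine Fintype.card_le_of_injective g fun i j hij => by_contra fun hne => (hsep hne).not_ge ?_
  calc dist (x i) (x j) ≤ dist (x i) (c (g i)) + dist (x j) (c (g i)) :=
        dist_triangle_right _ _ _
    _ ≤ r + r := add_le_add (hg i) (hij ▸ hg j)
    _ = 2 * r := by ring

theorem IsGonzalezSeq.lt_dist {d k : ℕ} {P : Finset (EuclideanSpace ℝ (Fin d))}
    {s : ℕ → EuclideanSpace ℝ (Fin d)} (hs : IsGonzalezSeq P k s) {p : EuclideanSpace ℝ (Fin d)}
    (hp : p ∈ P) {ρ : ℝ} {i j : ℕ} (hfar : ∀ l < j, ρ < dist p (s l)) (hij : i < j)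
    (hj : j < k) : ρ < dist (s j) (s i) := by
  have : Nonempty (Fin j) := ⟨⟨i, hij⟩⟩
  obtain ⟨l, hl⟩ := exists_eq_ciInf_of_finite (f := fun l : Fin j => ‖p - s l‖)
  calc ρ < ‖p - s l‖ := by rw [← dist_eq_norm]; exact hfar l l.2
    _ = ⨅ l : Fin j, ‖p - s l‖ := hl
    _ ≤ ⨅ l : Fin j, ‖s j - s l‖ := hs.2 j (by omega) hj p hp
    _ ≤ ‖s j - s i‖ := ciInf_le (Set.finite_range _).bddBelow (⟨i, hij⟩ : Fin j)
    _ = dist (s j) (s i) := (dist_eq_norm _ _).symm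

theorem gonzalez_covers_with_double_radius_general
    {d : ℕ} (P : Finset (EuclideanSpace ℝ (Fin d)))
    (r : ℝ) (k : ℕ) (c : Fin k → EuclideanSpace ℝ (Fin d))
    (hcov : ∀ p ∈ P, ∃ l : Fin k, p ∈ closedBall (c l) r)
    (k' : ℕ) (hk : k ≤ k') (s : ℕ → EuclideanSpace ℝ (Fin d))
    (hs : IsGonzalezSeq P k' s) :
    ∀ p ∈ P, ∃ j < k', p ∈ closedBall (s j) (2 * r) := by
  intro p hp
  by_contra! hnot
  have hfar (j : ℕ) (hj : j < k') : 2 * r < dist p (s j) := not_le.1 (hnot j hj)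
  let x : Option (Fin k') → EuclideanSpace ℝ (Fin d) := fun o => o.elim p fun i => s i
  have hsep : Pairwise fun a b => 2 * r < dist (x a) (x b) := by
    rintro (_ | i) (_ | j) hne
    · exact absurd rfl hne
    · exact hfar j j.2
    · exact dist_comm p (s i) ▸ hfar i i.2
    · rcases Fin.lt_or_lt_of_ne fun h => hne (congrArg some h) with h | h
      · exact dist_comm (s j) (s i) ▸ hs.lt_dist hp (fun l hl => hfar l (hl.trans j.2)) h j.2
      · exact hs.lt_dist hp (fun l hl => hfar l (hl.trans i.2)) h i.2
  have hxP (o : Option (Fin k')) : x o ∈ P := by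
    cases o with
    | none => exact hp
    | some i => exact hs.1 i i.2
  have hcard := card_le_of_pairwise_two_mul_lt_dist hsep fun o => hcov (x o) (hxP o)
  simp only [Fintype.card_option, Fintype.card_fin] at hcard
  omega

/-- If a finite nonempty set `P` is covered by `k` balls of radius `r`, then the points of
a Gonzalez sequence of length `k' ≥ k` in `P` cover `P` with balls of radius `2r`. -/
theorem gonzalez_covers_with_double_radius
    {d : ℕ} (P : Finset (EuclideanSpace ℝ (Fin d))) (hP : P.Nonempty)
    (r : ℝ) (hr : 0 ≤ r) (k : ℕ) (c : Fin k → EuclideanSpace ℝ (Fin d))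
    (hcov : ∀ p ∈ P, ∃ l : Fin k, p ∈ closedBall (c l) r)
    (k' : ℕ) (hk : k ≤ k') (s : ℕ → EuclideanSpace ℝ (Fin d))
    (hs : IsGonzalezSeq P k' s) :
    ∀ p ∈ P, ∃ j < k', p ∈ closedBall (s j) (2 * r) :=
  gonzalez_covers_with_double_radius_general P r k c hcov k' hk s hs
end
end

section
/- Let p_1, …, p_N ∈ ℝ^d, and let n_1, …, n_N ≥ 0 (supplies) and m_1, …, m_N ≥ 0 (demands) satisfy Σ_j n_j = Σ_j m_j. A feasible flow is a matrix (f_{jl})_{1 ≤ j,l ≤ N} with f_{jl} ≥ 0, Σ_l f_{jl} = n_j for every j, and Σ_j f_{jl} = m_l for every l; its cost is Σ_{j,l} f_{jl} ‖p_j − p_l‖. Then the infimum of the cost over all feasible flows equals the infimum of the cost over feasible flows that additionally satisfy f_{jj} = min{n_j, m_j} for every 1 ≤ j ≤ N; in particular, there is a cost-minimizing feasible flow whose diagonal entries are f_{jj} = min{n_j, m_j} for all j. -/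
noncomputable section

/-- A feasible flow for a transportation instance on common locations, with supplies `n`
and demands `m`. -/
def IsFeasibleLocFlow {N : ℕ} (n m : Fin N → ℝ) (f : Fin N → Fin N → ℝ) : Prop :=
  (∀ j l, 0 ≤ f j l) ∧ (∀ j, ∑ l, f j l = n j) ∧ (∀ l, ∑ j, f j l = m l)

/-- The cost of a flow `f` on locations `p`. -/
def flowCost {d N : ℕ} (p : Fin N → EuclideanSpace ℝ (Fin d))
    (f : Fin N → Fin N → ℝ) : ℝ :=
  ∑ j, ∑ l, f j l * ‖p j - p l‖

/-!
The feasible flows form a nonempty compact set, so among the cost minimizers there is one,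
`f`, of maximal trace `∑ i, f i i`. Always `f j j ≤ min (n j) (m j)`. If this were strict,
some mass would leave `j` towards a `k ≠ j` and some would arrive at `j` from an `l ≠ j`;
replacing `ε` units of the path `l → j → k` by `l → k` plus `ε` units staying at `j` keeps the
flow feasible, does not increase the cost by the triangle inequality, and raises the trace.
-/

theorem exists_ne_pos_of_apply_lt_sum {ι M : Type*} [Fintype ι] [AddCommMonoid M]
    [LinearOrder M] [IsOrderedCancelAddMonoid M] {g : ι → M} {i : ι} (h : g i < ∑ k, g k) :
    ∃ k, k ≠ i ∧ 0 < g k := by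
  classical
  obtain ⟨k, -, hk⟩ := Finset.exists_lt_of_sum_lt (s := Finset.univ)
    (f := fun k => if k = i then g i else 0) (by simpa using h)
  by_cases hki : k = i
  · simp [hki] at hk
  · exact ⟨k, hki, by simpa [hki] using hk⟩

section Flows

variable {d N : ℕ} {n m : Fin N → ℝ}

namespace IsFeasibleLocFlow

variable {f : Fin N → Fin N → ℝ}

theorem le_supply (hf : IsFeasibleLocFlow n m f) (j l : Fin N) : f j l ≤ n j :=
  hf.2.1 j ▸ Finset.single_le_sum (fun l _ => hf.1 j l) (Finset.mem_univ l)

theorem le_demand (hf : IsFeasibleLocFlow n m f) (j l : Fin N) : f j l ≤ m l :=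
  hf.2.2 l ▸ Finset.single_le_sum (f := fun j => f j l) (fun j _ => hf.1 j l) (Finset.mem_univ j)

theorem add {D : Fin N → Fin N → ℝ} (hf : IsFeasibleLocFlow n m f)
    (hrow : ∀ j, ∑ l, D j l = 0) (hcol : ∀ l, ∑ j, D j l = 0)
    (hnonneg : ∀ j l, 0 ≤ f j l + D j l) :
    IsFeasibleLocFlow n m (f + D) :=
  ⟨hnonneg, fun j => by simp [Finset.sum_add_distrib, hf.2.1 j, hrow j],
    fun l => by simp [Finset.sum_add_distrib, hf.2.2 l, hcol l]⟩

end IsFeasibleLocFlow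

theorem exists_isFeasibleLocFlow (hn : ∀ j, 0 ≤ n j) (hm : ∀ l, 0 ≤ m l)
    (hbal : ∑ j, n j = ∑ l, m l) : ∃ f, IsFeasibleLocFlow n m f := by
  rcases (Finset.sum_nonneg fun j _ => hn j : 0 ≤ ∑ j, n j).eq_or_lt with hzero | hpos
  · have hn0 := (Finset.sum_eq_zero_iff_of_nonneg fun j _ => hn j).1 hzero.symm
    have hm0 := (Finset.sum_eq_zero_iff_of_nonneg fun l _ => hm l).1 (hbal ▸ hzero.symm)
    exact ⟨0, fun _ _ => le_rfl, fun j => by simp [hn0 j], fun l => by simp [hm0 l]⟩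
  · refine ⟨fun j l => n j * m l / ∑ i, n i,
      fun j l => by have := hn j; have := hm l; positivity, fun j => ?_, fun l => ?_⟩
    · rw [← Finset.sum_div, ← Finset.mul_sum, ← hbal, mul_div_cancel_right₀ _ hpos.ne']
    · rw [← Finset.sum_div, ← Finset.sum_mul, mul_div_cancel_left₀ _ hpos.ne']

theorem isCompact_setOf_isFeasibleLocFlow (n m : Fin N → ℝ) :
    IsCompact {f | IsFeasibleLocFlow n m f} := by
  have hclosed : IsClosed {f | IsFeasibleLocFlow n m f} := by
    simp only [IsFeasibleLocFlow, Set.ofPred_and, Set.ofPred_forall]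
    refine (isClosed_iInter fun j => isClosed_iInter fun l => ?_).inter
      ((isClosed_iInter fun j => ?_).inter (isClosed_iInter fun l => ?_))
    · exact isClosed_le continuous_const (by fun_prop)
    · exact isClosed_eq (by fun_prop) continuous_const
    · exact isClosed_eq (by fun_prop) continuous_const
  refine (isCompact_Icc (a := 0) (b := fun j _ => n j)).of_isClosed_subset hclosed ?_
  exact fun f hf => ⟨fun j l => hf.1 j l, fun j l => hf.le_supply j l⟩

theorem continuous_flowCost (p : Fin N → EuclideanSpace ℝ (Fin d)) :
    Continuous (flowCost p) := by
  unfold flowCost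
  fun_prop

theorem flowCost_add_smul (p : Fin N → EuclideanSpace ℝ (Fin d)) (f D : Fin N → Fin N → ℝ)
    (ε : ℝ) : flowCost p (f + ε • D) = flowCost p f + ε * flowCost p D := by
  simp [flowCost, add_mul, Finset.sum_add_distrib, Finset.mul_sum, mul_assoc]

/-- One unit of the path `l → j → k` replaced by the direct route `l → k` and a unit staying
at `j`. -/
def shortcut (l j k : Fin N) (a b : Fin N) : ℝ :=
  (if a = j ∧ b = j then 1 else 0) + (if a = l ∧ b = k then 1 else 0) -
    (if a = l ∧ b = j then 1 else 0) - (if a = j ∧ b = k then 1 else 0)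

section Shortcut

variable (l j k : Fin N)

theorem sum_shortcut_row (a : Fin N) : ∑ b, shortcut l j k a b = 0 := by
  simp [shortcut, ite_and, Finset.sum_add_distrib, Finset.sum_sub_distrib]

theorem sum_shortcut_col (b : Fin N) : ∑ a, shortcut l j k a b = 0 := by
  simp [shortcut, ite_and, Finset.sum_add_distrib, Finset.sum_sub_distrib]

theorem flowCost_shortcut_nonpos (p : Fin N → EuclideanSpace ℝ (Fin d)) :
    flowCost p (shortcut l j k) ≤ 0 := by
  have hcost : flowCost p (shortcut l j k) = ‖p l - p k‖ - ‖p l - p j‖ - ‖p j - p k‖ := by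
    simp [flowCost, shortcut, ite_and, sub_mul, add_mul, Finset.sum_add_distrib,
      Finset.sum_sub_distrib]
  rw [hcost]
  linarith [norm_sub_le_norm_sub_add_norm_sub (p l) (p j) (p k)]

variable {l j k}

theorem one_le_trace_shortcut (hl : l ≠ j) (hk : k ≠ j) : 1 ≤ ∑ a, shortcut l j k a a := by
  simp [shortcut, ite_and, Finset.sum_add_distrib, Finset.sum_sub_distrib, hl, hk.symm,
    ite_nonneg]

theorem add_smul_shortcut_nonneg {f : Fin N → Fin N → ℝ} (hf : ∀ a b, 0 ≤ f a b) {ε : ℝ}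
    (hε : 0 ≤ ε) (hlj : ε ≤ f l j) (hjk : ε ≤ f j k) (hl : l ≠ j) (hk : k ≠ j) (a b : Fin N) :
    0 ≤ (f + ε • shortcut l j k) a b := by
  have := hf a b
  simp only [Pi.add_apply, Pi.smul_apply, smul_eq_mul, shortcut]
  split_ifs <;> grind

end Shortcut

theorem IsFeasibleLocFlow.exists_flowCost_le_trace_lt_of_diag_ne_min
    (p : Fin N → EuclideanSpace ℝ (Fin d)) {f : Fin N → Fin N → ℝ}
    (hf : IsFeasibleLocFlow n m f) {j : Fin N} (hj : f j j ≠ min (n j) (m j)) :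
    ∃ g, IsFeasibleLocFlow n m g ∧ flowCost p g ≤ flowCost p f ∧ ∑ i, f i i < ∑ i, g i i := by
  obtain ⟨hjn, hjm⟩ :=
    lt_min_iff.1 ((le_min (hf.le_supply j j) (hf.le_demand j j)).lt_of_ne hj)
  obtain ⟨k, hk, hjk⟩ := exists_ne_pos_of_apply_lt_sum (g := f j) (hf.2.1 j ▸ hjn)
  obtain ⟨l, hl, hlj⟩ := exists_ne_pos_of_apply_lt_sum (g := fun i => f i j) (hf.2.2 j ▸ hjm)
  set ε := min (f l j) (f j k)
  have hε : 0 < ε := lt_min hlj hjk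
  refine ⟨f + ε • shortcut l j k, hf.add ?_ ?_ ?_, ?_, ?_⟩
  · simp [← Finset.mul_sum, sum_shortcut_row]
  · simp [← Finset.mul_sum, sum_shortcut_col]
  · exact add_smul_shortcut_nonneg hf.1 hε.le (min_le_left _ _) (min_le_right _ _) hl hk
  · rw [flowCost_add_smul]
    nlinarith [flowCost_shortcut_nonpos l j k p]
  · have := one_le_trace_shortcut hl hk
    simp only [Pi.add_apply, Pi.smul_apply, smul_eq_mul, Finset.sum_add_distrib, ← Finset.mul_sum]
    nlinarith

theorem exists_flowCost_minimizer_maximizing_trace (p : Fin N → EuclideanSpace ℝ (Fin d))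
    (hne : ∃ f, IsFeasibleLocFlow n m f) :
    ∃ f, IsFeasibleLocFlow n m f ∧ (∀ g, IsFeasibleLocFlow n m g → flowCost p f ≤ flowCost p g) ∧
      ∀ g, IsFeasibleLocFlow n m g → flowCost p g ≤ flowCost p f → ∑ i, g i i ≤ ∑ i, f i i := by
  have hK := isCompact_setOf_isFeasibleLocFlow n m
  obtain ⟨f₀, hf₀, hmin₀⟩ := hK.exists_isMinOn hne (continuous_flowCost p).continuousOn
  have hM : IsCompact ({f | IsFeasibleLocFlow n m f} ∩ flowCost p ⁻¹' Set.Iic (flowCost p f₀)) :=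
    hK.inter_right (isClosed_Iic.preimage (continuous_flowCost p))
  obtain ⟨f, ⟨hf, hcost⟩, hmax⟩ := hM.exists_isMaxOn ⟨f₀, hf₀, Set.mem_preimage.2 Set.self_mem_Iic⟩
    (by fun_prop : Continuous fun f : Fin N → Fin N → ℝ => ∑ i, f i i).continuousOn
  exact ⟨f, hf, fun g hg => hcost.trans (hmin₀ hg), fun g hg hgf => hmax ⟨hg, hgf.trans hcost⟩⟩

end Flows

/-- **Claim 2.** For a transportation instance on common locations `p` with supplies `n`
and demands `m` of equal totals, the infimum of the cost over all feasible flows equals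
the infimum over feasible flows satisfying `f j j = min (n j) (m j)` for all `j`;
in particular some cost-minimizing feasible flow has these diagonal entries. -/
theorem exists_optimal_flow_with_diagonal
    {d N : ℕ} (p : Fin N → EuclideanSpace ℝ (Fin d))
    (n m : Fin N → ℝ) (hn : ∀ j, 0 ≤ n j) (hm : ∀ l, 0 ≤ m l)
    (hbal : ∑ j, n j = ∑ l, m l) :
    sInf {c : ℝ | ∃ f, IsFeasibleLocFlow n m f ∧ c = flowCost p f} =
      sInf {c : ℝ | ∃ f, IsFeasibleLocFlow n m f ∧
        (∀ j, f j j = min (n j) (m j)) ∧ c = flowCost p f} ∧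
    ∃ f, IsFeasibleLocFlow n m f ∧ (∀ j, f j j = min (n j) (m j)) ∧
      flowCost p f = sInf {c : ℝ | ∃ f, IsFeasibleLocFlow n m f ∧ c = flowCost p f} := by
  obtain ⟨f, hf, hmin, hmax⟩ :=
    exists_flowCost_minimizer_maximizing_trace p (exists_isFeasibleLocFlow hn hm hbal)
  have hdiag : ∀ j, f j j = min (n j) (m j) := by
    intro j
    by_contra hj
    obtain ⟨g, hg, hcost, htrace⟩ := hf.exists_flowCost_le_trace_lt_of_diag_ne_min p hj
    exact (hmax g hg hcost).not_gt htrace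
  have hall : IsLeast {c : ℝ | ∃ f, IsFeasibleLocFlow n m f ∧ c = flowCost p f} (flowCost p f) :=
    ⟨⟨f, hf, rfl⟩, by rintro _ ⟨g, hg, rfl⟩; exact hmin g hg⟩
  have hdiagonal : IsLeast {c : ℝ | ∃ f, IsFeasibleLocFlow n m f ∧
      (∀ j, f j j = min (n j) (m j)) ∧ c = flowCost p f} (flowCost p f) :=
    ⟨⟨f, hf, hdiag, rfl⟩, by rintro _ ⟨g, hg, -, rfl⟩; exact hmin g hg⟩
  rw [hall.csInf_eq, hdiagonal.csInf_eq]
  exact ⟨rfl, f, hf, hdiag, rfl⟩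
end
end

section
/- Let p_1, …, p_N ∈ ℝ^d with supplies n_1, …, n_N ≥ 0 and demands m_1, …, m_N ≥ 0 satisfying Σ_j n_j = Σ_j m_j, and let F = (f_{jl}) be a feasible flow. Suppose j, j_1, j_2 are pairwise distinct indices with f_{j j_1} > 0 and f_{j_2 j} > 0, and let δ = min{f_{j j_1}, f_{j_2 j}}. Define F' by f'_{jj} = f_{jj} + δ, f'_{j j_1} = f_{j j_1} − δ, f'_{j_2 j} = f_{j_2 j} − δ, f'_{j_2 j_1} = f_{j_2 j_1} + δ, and f'_{kl} = f_{kl} otherwise. Then F' is a feasible flow, its cost satisfies cost(F) − cost(F') = δ(‖p_{j_1} − p_j‖ + ‖p_{j_2} − p_j‖ − ‖p_{j_1} − p_{j_2}‖) ≥ 0, and at least one of f'_{j j_1}, f'_{j_2 j} equals 0. -/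
noncomputable section

/-- **Case 2 of the proof of Claim 2.** If `f j j₁ > 0` and `f j₂ j > 0` with
`j, j₁, j₂` pairwise distinct, rerouting `δ = min (f j j₁) (f j₂ j)` units through the
cells `(j, j)` and `(j₂, j₁)` keeps the flow feasible, decreases the cost by exactly
`δ (‖p j₁ - p j‖ + ‖p j₂ - p j‖ - ‖p j₁ - p j₂‖) ≥ 0` (triangle inequality), and
zeroes out one of the two cells `(j, j₁)`, `(j₂, j)`. -/
theorem reroute_case_two
    {d N : ℕ} (p : Fin N → EuclideanSpace ℝ (Fin d))
    (n m : Fin N → ℝ) (hn : ∀ j, 0 ≤ n j) (hm : ∀ l, 0 ≤ m l)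
    (hbal : ∑ j, n j = ∑ l, m l)
    (f : Fin N → Fin N → ℝ) (hf : IsFeasibleLocFlow n m f)
    (j j₁ j₂ : Fin N) (h01 : j ≠ j₁) (h02 : j ≠ j₂) (h12 : j₁ ≠ j₂)
    (h1 : 0 < f j j₁) (h2 : 0 < f j₂ j)
    (δ : ℝ) (hδ : δ = min (f j j₁) (f j₂ j))
    (f' : Fin N → Fin N → ℝ)
    (hf' : ∀ k l, f' k l =
      if k = j ∧ l = j then f k l + δ
      else if k = j ∧ l = j₁ then f k l - δ
      else if k = j₂ ∧ l = j then f k l - δ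
      else if k = j₂ ∧ l = j₁ then f k l + δ
      else f k l) :
    IsFeasibleLocFlow n m f' ∧
    flowCost p f - flowCost p f'
      = δ * (‖p j₁ - p j‖ + ‖p j₂ - p j‖ - ‖p j₁ - p j₂‖) ∧
    0 ≤ δ * (‖p j₁ - p j‖ + ‖p j₂ - p j‖ - ‖p j₁ - p j₂‖) ∧
    (f' j j₁ = 0 ∨ f' j₂ j = 0) := by
  obtain ⟨hpos, hrow, hcol⟩ := hf
  have hδ0 : 0 < δ := by rw [hδ]; exact lt_min h1 h2
  have hδ1 : δ ≤ f j j₁ := hδ ▸ min_le_left _ _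
  have hδ2 : δ ≤ f j₂ j := hδ ▸ min_le_right _ _
  have hform : ∀ k l, f' k l = f k l
      + (if k = j ∧ l = j then δ else 0)
      - (if k = j ∧ l = j₁ then δ else 0)
      - (if k = j₂ ∧ l = j then δ else 0)
      + (if k = j₂ ∧ l = j₁ then δ else 0) := by
    intro k l
    rw [hf']
    by_cases hkj : k = j <;> by_cases hk2 : k = j₂ <;>
      by_cases hlj : l = j <;> by_cases hl1 : l = j₁ <;>
      simp [hkj, hk2, hlj, hl1, h01, h02, h12, Ne.symm h01, Ne.symm h02,
        Ne.symm h12] <;> ring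
  have rowind : ∀ (a b k : Fin N),
      (∑ l, if k = a ∧ l = b then δ else 0) = if k = a then δ else 0 := by
    intro a b k; by_cases h : k = a <;> simp [h]
  have colind : ∀ (a b l : Fin N),
      (∑ k, if k = a ∧ l = b then δ else 0) = if l = b then δ else 0 := by
    intro a b l; by_cases h : l = b <;> simp [h]
  have key : ∀ (a b : Fin N),
      (∑ k : Fin N, ∑ l : Fin N, (if k = a ∧ l = b then δ else 0) * ‖p k - p l‖)
        = δ * ‖p a - p b‖ := by
    intro a b
    have h1 : ∀ k : Fin N, (∑ l, (if k = a ∧ l = b then δ else 0) * ‖p k - p l‖)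
        = if k = a then δ * ‖p a - p b‖ else 0 := by
      intro k; by_cases h : k = a <;> simp [h, ite_mul]
    rw [Finset.sum_congr rfl fun k _ => h1 k]
    simp
  have hcost : flowCost p f - flowCost p f'
      = δ * (‖p j₁ - p j‖ + ‖p j₂ - p j‖ - ‖p j₁ - p j₂‖) := by
    unfold flowCost
    rw [← Finset.sum_sub_distrib]
    simp only [← Finset.sum_sub_distrib, ← sub_mul]
    have hpt : ∀ k l : Fin N, (f k l - f' k l) * ‖p k - p l‖
        = - ((if k = j ∧ l = j then δ else 0) * ‖p k - p l‖)
          + (if k = j ∧ l = j₁ then δ else 0) * ‖p k - p l‖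
          + (if k = j₂ ∧ l = j then δ else 0) * ‖p k - p l‖
          - (if k = j₂ ∧ l = j₁ then δ else 0) * ‖p k - p l‖ := by
      intro k l; rw [hform]; ring
    have expand : (∑ k : Fin N, ∑ l : Fin N, (f k l - f' k l) * ‖p k - p l‖)
        = -(δ * ‖p j - p j‖) + δ * ‖p j - p j₁‖ + δ * ‖p j₂ - p j‖
          - δ * ‖p j₂ - p j₁‖ := by
      simp only [hpt, Finset.sum_add_distrib, Finset.sum_sub_distrib,
        Finset.sum_neg_distrib, key]
    rw [expand, norm_sub_rev (p j) (p j₁), norm_sub_rev (p j₂) (p j₁)]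
    simp only [sub_self, norm_zero]
    ring
  refine ⟨⟨?_, ?_, ?_⟩, hcost, ?_, ?_⟩
  · intro k l
    rw [hf']
    split_ifs with a b c e
    · have := hpos k l; linarith
    · obtain ⟨rfl, rfl⟩ := b; linarith
    · obtain ⟨rfl, rfl⟩ := c; linarith
    · have := hpos k l; linarith
    · exact hpos k l
  · intro k
    simp only [hform, Finset.sum_add_distrib, Finset.sum_sub_distrib, rowind, hrow]
    split_ifs <;> ring
  · intro l
    simp only [hform, Finset.sum_add_distrib, Finset.sum_sub_distrib, colind, hcol]
    split_ifs <;> ring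
  · have htri : ‖p j₁ - p j₂‖ ≤ ‖p j₁ - p j‖ + ‖p j₂ - p j‖ := by
      have := norm_sub_le_norm_sub_add_norm_sub (p j₁) (p j) (p j₂)
      rw [norm_sub_rev (p j) (p j₂)] at this
      linarith
    have := hδ0.le
    nlinarith
  · rcases le_total (f j j₁) (f j₂ j) with h | h
    · left
      rw [hf', if_neg (by simp [Ne.symm h01]), if_pos ⟨rfl, rfl⟩, hδ,
        min_eq_left h]
      ring
    · right
      rw [hf', if_neg (by simp [Ne.symm h02]), if_neg (by simp [Ne.symm h02]),
        if_pos ⟨rfl, rfl⟩, hδ, min_eq_right h]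
      ring
end
end
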